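/- Let G be an intersection graph of closed intervals of lengths in [l_min, l_max] with l_min > 0, let γ = l_max/l_min, and let k ≥ 1. Running the greedy-by-weight maximum weight independent set algorithm k times — each time on the subgraph induced by vertices not yet selected, collecting independent sets I_1, ..., I_k — yields a k-colorable subgraph ∪_j I_j whose total weight is at least (1 − e^{−1/(2+γ)}) times the maximum weight of any k-colorable induced subgraph of G. -/

import Mathlib

/-- Greedy independent set: process the list in order, adding a vertex whenever it is
non-adjacent to all previously added vertices. -/
noncomputable def greedySelect {V : Type*} [DecidableEq V] (adj : V → V → Prop) :
    List V → Finset V → Finset V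
  | [], acc => acc
  | v :: rest, acc =>
    haveI := Classical.propDecidable (∀ u ∈ acc, ¬ adj v u)
    if ∀ u ∈ acc, ¬ adj v u then greedySelect adj rest (insert v acc)
    else greedySelect adj rest acc

/-- Iterate the greedy independent set algorithm `k` times on the residual vertex list,
returning the union of the selected independent sets. -/
noncomputable def greedyRounds {V : Type*} [DecidableEq V] (adj : V → V → Prop) :
    ℕ → List V → Finset V
  | 0, _ => ∅
  | k + 1, l =>
    let I := greedySelect adj l ∅
    I ∪ greedyRounds adj k (l.filter fun v => v ∉ I)

/-!
Greedy-by-weight charges every vertex `s` of an independent set to a selected vertex `u` with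
`w s ≤ w u` in the closed neighbourhood of `s`. The vertices charged to `u` are pairwise disjoint
intervals meeting the interval of `u`: at most two of them stick out of it, and the others lie
inside it, so there are at most `2 + γ` of them. Hence one greedy round collects at least a
`1 / (k (2 + γ))` fraction of the weight of any properly `k`-coloured set (colour class by colour
class), and the standard max-coverage argument shows that after `k` rounds the uncollected part of
that weight is at most `(1 - 1 / (k (2 + γ)))^k ≤ e^{-1/(2+γ)}` of it.
-/

open Finset MeasureTheory

section IntervalPacking

theorem card_filter_mem_le_one_of_pairwiseDisjoint {ι α : Type*} {S : Finset ι} {f : ι → Set α}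
    (hS : (S : Set ι).PairwiseDisjoint f) (z : α) [DecidablePred fun s => z ∈ f s] :
    #(S.filter fun s => z ∈ f s) ≤ 1 :=
  card_le_one.2 fun _s hs _t ht =>
    hS.elim_set (mem_filter.1 hs).1 (mem_filter.1 ht).1 z (mem_filter.1 hs).2 (mem_filter.1 ht).2

theorem sum_sub_le_of_pairwiseDisjoint_Icc_subset {ι : Type*} {S : Finset ι} {x y : ι → ℝ}
    {p q : ℝ} (hpq : p ≤ q) (hxy : ∀ s ∈ S, x s ≤ y s)
    (hS : (S : Set ι).PairwiseDisjoint fun s => Set.Icc (x s) (y s))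
    (hsub : ∀ s ∈ S, Set.Icc (x s) (y s) ⊆ Set.Icc p q) :
    ∑ s ∈ S, (y s - x s) ≤ q - p := by
  have hvol : ∑ s ∈ S, volume (Set.Icc (x s) (y s)) ≤ volume (Set.Icc p q) := by
    rw [← measure_biUnion_finset hS fun s _ => measurableSet_Icc]
    exact measure_mono (Set.iUnion₂_subset hsub)
  simp only [Real.volume_Icc] at hvol
  rwa [← ENNReal.ofReal_sum_of_nonneg fun s hs => sub_nonneg.2 (hxy s hs),
    ENNReal.ofReal_le_ofReal_iff (sub_nonneg.2 hpq)] at hvol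

theorem card_le_of_pairwiseDisjoint_Icc_meet {ι : Type*} {S : Finset ι} {x y : ι → ℝ}
    {lmin p q : ℝ} (hlmin : 0 < lmin) (hpq : p ≤ q) (hlen : ∀ s ∈ S, lmin ≤ y s - x s)
    (hS : (S : Set ι).PairwiseDisjoint fun s => Set.Icc (x s) (y s))
    (hmeet : ∀ s ∈ S, (Set.Icc (x s) (y s) ∩ Set.Icc p q).Nonempty) :
    (#S : ℝ) ≤ 2 + (q - p) / lmin := by
  classical
  set S₁ := S.filter fun s => p ∈ Set.Icc (x s) (y s)
  set S₂ := S.filter fun s => q ∈ Set.Icc (x s) (y s)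
  set S₃ := S.filter fun s => Set.Icc (x s) (y s) ⊆ Set.Icc p q
  have hcover : S ⊆ S₁ ∪ S₂ ∪ S₃ := by
    intro s hs
    obtain ⟨z, ⟨hxz, hzy⟩, hpz, hzq⟩ := hmeet s hs
    simp only [S₁, S₂, S₃, mem_union, mem_filter, hs, true_and, Set.mem_Icc]
    by_cases hp : x s ≤ p
    · exact Or.inl (Or.inl ⟨hp, hpz.trans hzy⟩)
    by_cases hq : q ≤ y s
    · exact Or.inl (Or.inr ⟨hxz.trans hzq, hq⟩)
    · exact Or.inr (Set.Icc_subset_Icc (by linarith) (by linarith))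
  have hS₃ : (#S₃ : ℝ) * lmin ≤ q - p :=
    calc (#S₃ : ℝ) * lmin = ∑ _s ∈ S₃, lmin := by rw [sum_const, nsmul_eq_mul]
      _ ≤ ∑ s ∈ S₃, (y s - x s) := sum_le_sum fun s hs => hlen s (mem_filter.1 hs).1
      _ ≤ q - p := sum_sub_le_of_pairwiseDisjoint_Icc_subset hpq
          (fun s hs => by linarith [hlen s (mem_filter.1 hs).1])
          (hS.subset (coe_subset.2 (filter_subset _ _))) fun s hs => (mem_filter.1 hs).2
  have hcard : #S ≤ #S₁ + #S₂ + #S₃ :=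
    (card_le_card hcover).trans
      ((card_union_le _ _).trans (Nat.add_le_add_right (card_union_le _ _) _))
  have h₁ := card_filter_mem_le_one_of_pairwiseDisjoint hS p
  have h₂ := card_filter_mem_le_one_of_pairwiseDisjoint hS q
  have h₃ : (#S₃ : ℝ) ≤ (q - p) / lmin := (le_div_iff₀ hlmin).2 hS₃
  have : (#S : ℝ) ≤ #S₁ + #S₂ + #S₃ := by exact_mod_cast hcard
  have : (#S₁ : ℝ) + #S₂ ≤ 2 := by exact_mod_cast Nat.add_le_add h₁ h₂
  linarith

end IntervalPacking

def HasLocalIndepBound {ι : Type*} (adj : ι → ι → Prop) (c : ℝ) : Prop :=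
  ∀ v (S : Finset ι), (S : Set ι).Pairwise (fun s t => ¬ adj s t) →
    (∀ s ∈ S, s = v ∨ adj s v) → (#S : ℝ) ≤ c

theorem hasLocalIndepBound_of_interval {ι : Type*} {a len : ι → ℝ} {lmin lmax : ℝ}
    (hlmin : 0 < lmin) (hlen : ∀ i, lmin ≤ len i ∧ len i ≤ lmax) {adj : ι → ι → Prop}
    (hadj : ∀ i j, adj i j ↔ i ≠ j ∧
      (Set.Icc (a i) (a i + len i) ∩ Set.Icc (a j) (a j + len j)).Nonempty) :
    HasLocalIndepBound adj (2 + lmax / lmin) := by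
  intro v S hS hSv
  have hlen_pos : ∀ i, 0 ≤ len i := fun i => hlmin.le.trans (hlen i).1
  have hdisj : (S : Set ι).PairwiseDisjoint fun s => Set.Icc (a s) (a s + len s) := by
    intro s hs t ht hst
    rw [Function.onFun, Set.disjoint_iff_inter_eq_empty, ← Set.not_nonempty_iff_eq_empty]
    exact fun hmeet => hS hs ht hst ((hadj s t).2 ⟨hst, hmeet⟩)
  have hmeet : ∀ s ∈ S, (Set.Icc (a s) (a s + len s) ∩ Set.Icc (a v) (a v + len v)).Nonempty := by
    intro s hs
    rcases hSv s hs with rfl | hsv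
    · rw [Set.inter_self, Set.nonempty_Icc]
      linarith [hlen_pos s]
    · exact ((hadj s v).1 hsv).2
  calc (#S : ℝ) ≤ 2 + (a v + len v - a v) / lmin :=
        card_le_of_pairwiseDisjoint_Icc_meet hlmin (by linarith [hlen_pos v])
          (fun s _ => by linarith [(hlen s).1]) hdisj hmeet
    _ ≤ 2 + lmax / lmin := by
        gcongr
        linarith [(hlen v).2]

section Greedy

variable {ι : Type*} [DecidableEq ι] (adj : ι → ι → Prop)

theorem subset_greedySelect (l : List ι) (acc : Finset ι) : acc ⊆ greedySelect adj l acc := by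
  induction l generalizing acc with
  | nil => rw [greedySelect]
  | cons v rest ih =>
    rw [greedySelect]
    split_ifs
    · exact (subset_insert v acc).trans (ih _)
    · exact ih acc

theorem mem_of_mem_greedySelect {l : List ι} {acc : Finset ι} {v : ι}
    (hv : v ∈ greedySelect adj l acc) : v ∈ l ∨ v ∈ acc := by
  induction l generalizing acc with
  | nil => rw [greedySelect] at hv; exact Or.inr hv
  | cons u rest ih =>
    rw [greedySelect] at hv
    split_ifs at hv
    · rcases ih hv with h | h
      · exact Or.inl (List.mem_cons_of_mem u h)
      · rcases mem_insert.1 h with rfl | h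
        · exact Or.inl List.mem_cons_self
        · exact Or.inr h
    · exact (ih hv).imp_left (List.mem_cons_of_mem u)

theorem mem_of_mem_greedyRounds {m : ℕ} {l : List ι} {v : ι} (hv : v ∈ greedyRounds adj m l) :
    v ∈ l := by
  induction m generalizing l with
  | zero => simp [greedyRounds] at hv
  | succ m ih =>
    rcases mem_union.1 hv with h | h
    · simpa using mem_of_mem_greedySelect adj h
    · exact List.mem_of_mem_filter (ih h)

theorem exists_mem_greedySelect_dominating (w : ι → ℝ) {l : List ι}
    (hl : l.Pairwise fun x y => w y ≤ w x) {acc : Finset ι}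
    (hacc : ∀ u ∈ acc, ∀ s ∈ l, w s ≤ w u) {s : ι} (hs : s ∈ l) :
    ∃ u ∈ greedySelect adj l acc, (s = u ∨ adj s u) ∧ w s ≤ w u := by
  induction l generalizing acc with
  | nil => simp at hs
  | cons x rest ih =>
    rw [List.pairwise_cons] at hl
    have hacc_rest : ∀ u ∈ acc, ∀ t ∈ rest, w t ≤ w u :=
      fun u hu t ht => hacc u hu t (List.mem_cons_of_mem x ht)
    rw [greedySelect]
    split_ifs with hx
    · rcases List.mem_cons.1 hs with rfl | hs
      · exact ⟨s, subset_greedySelect adj rest _ (mem_insert_self s acc), Or.inl rfl, le_rfl⟩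
      · refine ih hl.2 (fun u hu t ht => ?_) hs
        rcases mem_insert.1 hu with rfl | hu
        · exact hl.1 t ht
        · exact hacc_rest u hu t ht
    · rcases List.mem_cons.1 hs with rfl | hs
      · push Not at hx
        obtain ⟨u, hu, hsu⟩ := hx
        exact ⟨u, subset_greedySelect adj rest acc hu, Or.inr hsu, hacc u hu s List.mem_cons_self⟩
      · exact ih hl.2 hacc_rest hs

variable {adj} {w : ι → ℝ}

theorem sum_le_mul_sum_greedySelect {c : ℝ} (hc : HasLocalIndepBound adj c) (hw : ∀ i, 0 ≤ w i)
    {l : List ι} (hl : l.Pairwise fun x y => w y ≤ w x) {S : Finset ι}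
    (hS : (S : Set ι).Pairwise fun s t => ¬ adj s t) (hSl : ∀ s ∈ S, s ∈ l) :
    ∑ s ∈ S, w s ≤ c * ∑ u ∈ greedySelect adj l ∅, w u := by
  choose! φ hφG hφadj hφw using fun s hs =>
    exists_mem_greedySelect_dominating adj w hl (acc := ∅) (by simp) (hSl s hs)
  rw [← sum_fiberwise_of_maps_to hφG, mul_sum]
  refine sum_le_sum fun u _ => ?_
  set F := S.filter fun s => φ s = u
  have hF : (#F : ℝ) ≤ c := by
    refine hc u F (hS.mono (coe_subset.2 (filter_subset _ _))) fun s hs => ?_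
    obtain ⟨hsS, rfl⟩ := mem_filter.1 hs
    exact hφadj s hsS
  calc ∑ s ∈ F, w s ≤ #F • w u := sum_le_card_nsmul _ _ _ fun s hs => by
        obtain ⟨hsS, rfl⟩ := mem_filter.1 hs
        exact hφw s hsS
    _ = #F * w u := nsmul_eq_mul _ _
    _ ≤ c * w u := mul_le_mul_of_nonneg_right hF (hw u)

theorem sum_le_mul_sum_greedySelect_of_coloring {c : ℝ} (hc : HasLocalIndepBound adj c)
    (hw : ∀ i, 0 ≤ w i) {l : List ι} (hl : l.Pairwise fun x y => w y ≤ w x) {k : ℕ}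
    (g : ι → Fin k) {A : Finset ι} (hg : ∀ u ∈ A, ∀ v ∈ A, adj u v → g u ≠ g v)
    (hAl : ∀ a ∈ A, a ∈ l) :
    ∑ a ∈ A, w a ≤ (k * c) * ∑ u ∈ greedySelect adj l ∅, w u := by
  have hclass : ∀ j, ∑ a ∈ A with g a = j, w a ≤ c * ∑ u ∈ greedySelect adj l ∅, w u := by
    refine fun j => sum_le_mul_sum_greedySelect hc hw hl (fun s hs t ht _ hst => ?_)
      fun s hs => hAl s (mem_filter.1 hs).1
    obtain ⟨hs, hsj⟩ := mem_filter.1 hs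
    obtain ⟨ht, htj⟩ := mem_filter.1 ht
    exact hg s hs t ht hst (hsj.trans htj.symm)
  calc ∑ a ∈ A, w a = ∑ j, ∑ a ∈ A with g a = j, w a := (sum_fiberwise A g w).symm
    _ ≤ ∑ _j : Fin k, c * ∑ u ∈ greedySelect adj l ∅, w u := sum_le_sum fun j _ => hclass j
    _ = (k * c) * ∑ u ∈ greedySelect adj l ∅, w u := by simp [mul_assoc]

theorem sum_sub_sum_greedyRounds_le (hw : ∀ i, 0 ≤ w i) {P : Finset ι → Prop}
    (hP : ∀ ⦃A B⦄, B ⊆ A → P A → P B) {r : ℝ} (hr : 1 ≤ r)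
    (happrox : ∀ l : List ι, (l.Pairwise fun x y => w y ≤ w x) → ∀ A, P A → (∀ a ∈ A, a ∈ l) →
      ∑ a ∈ A, w a ≤ r * ∑ u ∈ greedySelect adj l ∅, w u)
    (m : ℕ) {l : List ι} (hl : l.Pairwise fun x y => w y ≤ w x) {A : Finset ι} (hA : P A)
    (hAl : ∀ a ∈ A, a ∈ l) :
    ∑ a ∈ A, w a - ∑ u ∈ greedyRounds adj m l, w u ≤ (1 - 1 / r) ^ m * ∑ a ∈ A, w a := by
  induction m generalizing l A with
  | zero => simp [greedyRounds]
  | succ m ih =>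
    set I := greedySelect adj l ∅
    set l' := l.filter fun v => v ∉ I
    have hdisj : Disjoint I (greedyRounds adj m l') := disjoint_right.2 fun v hv => by
      simpa [l'] using (List.mem_filter.1 (mem_of_mem_greedyRounds adj hv)).2
    have hrest := ih (l := l') (hl.filter _) (hP sdiff_subset hA) fun a ha => by
      obtain ⟨haA, haI⟩ := mem_sdiff.1 ha
      exact List.mem_filter.2 ⟨hAl a haA, by simpa using haI⟩
    have hgain : (∑ a ∈ A, w a) / r ≤ ∑ u ∈ I, w u :=
      (div_le_iff₀ (by linarith)).2 (by linarith [happrox l hl A hA hAl])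
    have hinter : ∑ a ∈ A ∩ I, w a ≤ ∑ u ∈ I, w u :=
      sum_le_sum_of_subset_of_nonneg inter_subset_right fun i _ _ => hw i
    have hsplit := sum_inter_add_sum_sdiff A I w
    have hβ₀ : 0 ≤ 1 - 1 / r := sub_nonneg.2 ((div_le_one (by linarith)).2 hr)
    have hβ₁ : 1 - 1 / r ≤ 1 := sub_le_self _ (one_div_nonneg.2 (by linarith))
    have hβm₀ : 0 ≤ (1 - 1 / r) ^ m := pow_nonneg hβ₀ m
    have hβm₁ : (1 - 1 / r) ^ m ≤ 1 := pow_le_one₀ hβ₀ hβ₁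
    have hconvex : (1 - (1 - 1 / r) ^ m) * ∑ a ∈ A ∩ I, w a +
        (1 - 1 / r) ^ m * ((∑ a ∈ A, w a) / r) ≤ ∑ u ∈ I, w u := by
      linarith [mul_le_mul_of_nonneg_left hinter (sub_nonneg.2 hβm₁),
        mul_le_mul_of_nonneg_left hgain hβm₀]
    rw [greedyRounds, sum_union hdisj, pow_succ]
    linear_combination hrest + hconvex - (1 - (1 - 1 / r) ^ m) * hsplit

end Greedy

theorem iterated_greedy_interval_k_colorable_general {ι : Type*} [DecidableEq ι]
    (a len : ι → ℝ) (lmin lmax : ℝ) (hlmin : 0 < lmin)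
    (hlen : ∀ i, lmin ≤ len i ∧ len i ≤ lmax)
    (γ : ℝ) (hγ : γ = lmax / lmin)
    (adj : ι → ι → Prop)
    (hadj : ∀ i j, adj i j ↔ i ≠ j ∧
      (Set.Icc (a i) (a i + len i) ∩ Set.Icc (a j) (a j + len j)).Nonempty)
    (w : ι → ℝ) (hw : ∀ i, 0 ≤ w i) (k : ℕ) (hk : 1 ≤ k)
    (l : List ι) (hsort : l.Pairwise fun x y => w y ≤ w x)
    (hall : ∀ i : ι, i ∈ l)
    (V' : Finset ι) (g : ι → Fin k)
    (hcol : ∀ u ∈ V', ∀ v ∈ V', adj u v → g u ≠ g v) :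
    (1 - Real.exp (-1 / (2 + γ))) * ∑ v ∈ V', w v ≤
      ∑ v ∈ greedyRounds adj k l, w v := by
  rcases V'.eq_empty_or_nonempty with rfl | ⟨v, -⟩
  · simpa using sum_nonneg fun i _ => hw i
  have hγ1 : 1 ≤ γ := hγ ▸ (one_le_div hlmin).2 ((hlen v).1.trans (hlen v).2)
  have hlocal : HasLocalIndepBound adj (2 + γ) :=
    hγ ▸ hasLocalIndepBound_of_interval hlmin hlen hadj
  have hk' : (1 : ℝ) ≤ k := by exact_mod_cast hk
  have hrounds := sum_sub_sum_greedyRounds_le hw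
    (P := fun A => ∀ u ∈ A, ∀ v ∈ A, adj u v → g u ≠ g v)
    (fun A B hBA hA u hu v hv => hA u (hBA hu) v (hBA hv))
    (one_le_mul_of_one_le_of_one_le hk' (by linarith))
    (fun l hl A hA hAl => sum_le_mul_sum_greedySelect_of_coloring hlocal hw hl g hA hAl)
    k hsort hcol fun a _ => hall a
  have hexp : (1 - 1 / (k * (2 + γ))) ^ k ≤ Real.exp (-1 / (2 + γ)) := by
    have := Real.one_sub_div_pow_le_exp_neg (n := k) (t := 1 / (2 + γ))
      ((div_le_one (by linarith)).2 (by linarith) |>.trans hk')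
    rwa [div_div, mul_comm, ← neg_div] at this
  linarith [mul_le_mul_of_nonneg_right hexp (sum_nonneg fun i (_ : i ∈ V') => hw i)]

theorem iterated_greedy_interval_k_colorable {ι : Type*} [Fintype ι] [DecidableEq ι]
    (a len : ι → ℝ) (lmin lmax : ℝ) (hlmin : 0 < lmin)
    (hlen : ∀ i, lmin ≤ len i ∧ len i ≤ lmax)
    (γ : ℝ) (hγ : γ = lmax / lmin)
    (adj : ι → ι → Prop)
    (hadj : ∀ i j, adj i j ↔ i ≠ j ∧
      (Set.Icc (a i) (a i + len i) ∩ Set.Icc (a j) (a j + len j)).Nonempty)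
    (w : ι → ℝ) (hw : ∀ i, 0 ≤ w i) (k : ℕ) (hk : 1 ≤ k)
    (l : List ι) (hsort : l.Pairwise fun x y => w y ≤ w x)
    (hnodup : l.Nodup) (hall : ∀ i : ι, i ∈ l)
    (V' : Finset ι) (g : ι → Fin k)
    (hcol : ∀ u ∈ V', ∀ v ∈ V', adj u v → g u ≠ g v) :
    (1 - Real.exp (-1 / (2 + γ))) * ∑ v ∈ V', w v ≤
      ∑ v ∈ greedyRounds adj k l, w v :=
  iterated_greedy_interval_k_colorable_general a len lmin lmax hlmin hlen γ hγ adj hadj w hw k hk l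
    hsort hall V' g hcol
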